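/- arXiv:math-ph/0106022 — 2 statements merged into one kernel-verified Lean document; each statement's English description precedes it below -/
import Mathlib

section
/- The Curie-Weiss partition function admits the integral representation Z_N(β) = 2^N e^{-β/2} √(N/(2πβ)) ∫_{-∞}^{∞} exp(N[-y²/(2β) + log cosh y]) dy for every β > 0. -/
open Finset MeasureTheory

/-- The spin value associated to a Boolean configuration entry. -/
noncomputable def spin (b : Bool) : ℝ := if b then 1 else -1

/-- The Curie-Weiss Hamiltonian `H_N(σ) = -(1/N) Σ_{1≤i<j≤N} σ_i σ_j`. -/
noncomputable def cwH (N : ℕ) (σ : Fin N → Bool) : ℝ :=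
  -(1 / (N : ℝ)) * ∑ i, ∑ j ∈ Finset.Ioi i, spin (σ i) * spin (σ j)

/-- The Curie-Weiss partition function `Z_N(β) = Σ_σ exp(-β H_N(σ))`. -/
noncomputable def cwZ (N : ℕ) (β : ℝ) : ℝ :=
  ∑ σ : Fin N → Bool, Real.exp (-β * cwH N σ)

lemma spin_mul_self (b : Bool) : spin b * spin b = 1 := by cases b <;> simp [spin]

lemma two_sum_Ioi (N : ℕ) (σ : Fin N → Bool) :
    2 * ∑ i, ∑ j ∈ Finset.Ioi i, spin (σ i) * spin (σ j)
      = (∑ i, spin (σ i))^2 - N := by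
  have key := Finset.sum_sum_Ioi_add_eq_sum_sum_off_diag
    (fun i j : Fin N => spin (σ i) * spin (σ j))
  have l1 : 2 * ∑ i, ∑ j ∈ Finset.Ioi i, spin (σ i) * spin (σ j)
      = ∑ i, ∑ j ∈ Finset.Ioi i,
          ((fun i j : Fin N => spin (σ i) * spin (σ j)) j i
            + (fun i j : Fin N => spin (σ i) * spin (σ j)) i j) := by
    rw [Finset.mul_sum]
    refine Finset.sum_congr rfl fun i _ => ?_
    rw [Finset.mul_sum]
    exact Finset.sum_congr rfl fun j _ => by ring
  rw [l1, key]
  have l2 : ∀ i : Fin N, ∑ j ∈ ({i}ᶜ : Finset (Fin N)), spin (σ j) * spin (σ i)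
      = ((∑ j, spin (σ j)) - spin (σ i)) * spin (σ i) := by
    intro i
    rw [← Finset.sum_mul]
    congr 1
    rw [Finset.compl_singleton]
    exact eq_sub_of_add_eq (Finset.sum_erase_add _ _ (Finset.mem_univ i))
  trans (∑ i, ((∑ j, spin (σ j)) - spin (σ i)) * spin (σ i))
  · refine Finset.sum_congr rfl fun i _ => ?_
    convert l2 i using 3
  have expand : ∀ i : Fin N, ((∑ j, spin (σ j)) - spin (σ i)) * spin (σ i)
      = (∑ j, spin (σ j)) * spin (σ i) - 1 := fun i => by rw [sub_mul, spin_mul_self]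
  simp_rw [expand]
  rw [Finset.sum_sub_distrib, ← Finset.mul_sum, Finset.sum_const, Finset.card_univ,
    Fintype.card_fin, nsmul_eq_mul, mul_one]
  ring

lemma sum_exp_spin (N : ℕ) (c : ℝ) :
    ∑ σ : Fin N → Bool, Real.exp (c * ∑ i, spin (σ i)) = (2 * Real.cosh c) ^ N := by
  have h1 : ∀ σ : Fin N → Bool,
      Real.exp (c * ∑ i, spin (σ i)) = ∏ i, Real.exp (c * spin (σ i)) := by
    intro σ; rw [Finset.mul_sum, Real.exp_sum]
  simp_rw [h1]
  have h2 := Finset.prod_univ_sum (fun _ : Fin N => (Finset.univ : Finset Bool))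
    (fun _ b => Real.exp (c * spin b))
  rw [Fintype.piFinset_univ] at h2
  rw [← h2]
  have h3 : ∑ b : Bool, Real.exp (c * spin b) = 2 * Real.cosh c := by
    rw [Fintype.sum_bool, Real.cosh_eq]
    simp [spin]
    ring
  rw [h3, Finset.prod_const, Finset.card_univ, Fintype.card_fin]

lemma gauss_integrable (t : ℝ) : Integrable (fun x : ℝ => Real.exp (-x^2/2 + t*x)) := by
  have h : ∀ x : ℝ, Real.exp (-x^2/2 + t*x)
      = Real.exp (t^2/2) * Real.exp (-(1/2) * (x - t)^2) := by
    intro x; rw [← Real.exp_add]; ring_nf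
  simp_rw [h]
  exact ((integrable_exp_neg_mul_sq (by norm_num : (0:ℝ) < 1/2)).comp_sub_right t).const_mul _

lemma gauss_eval (t : ℝ) :
    ∫ x : ℝ, Real.exp (-x^2/2 + t*x) = Real.sqrt (2*Real.pi) * Real.exp (t^2/2) := by
  have h : ∀ x : ℝ, Real.exp (-x^2/2 + t*x)
      = Real.exp (t^2/2) * Real.exp (-(1/2) * (x - t)^2) := by
    intro x; rw [← Real.exp_add]; ring_nf
  simp_rw [h]
  rw [integral_const_mul, integral_sub_right_eq_self (fun x => Real.exp (-(1/2) * x^2)) t,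
    integral_gaussian]
  rw [mul_comm]
  congr 1
  rw [div_div_eq_mul_div, div_one, mul_comm]

/-- Integral representation of the Curie-Weiss partition function:
`Z_N(β) = 2^N e^{-β/2} √(N/(2πβ)) ∫ exp(N[-y²/(2β) + log cosh y]) dy`. -/
theorem curie_weiss_partition_function_integral_representation
    (N : ℕ) (hN : 1 ≤ N) (β : ℝ) (hβ : 0 < β) :
    cwZ N β
      = 2 ^ N * Real.exp (-β / 2) * Real.sqrt ((N : ℝ) / (2 * Real.pi * β)) *
          ∫ y : ℝ, Real.exp ((N : ℝ) * (-(y ^ 2) / (2 * β) + Real.log (Real.cosh y))) := by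
  have hN0 : (0:ℝ) < N := by exact_mod_cast hN
  have hNne : (N:ℝ) ≠ 0 := ne_of_gt hN0
  have hβne : β ≠ 0 := ne_of_gt hβ
  set s : ℝ := Real.sqrt (β / N) with hs
  have hs0 : 0 < s := Real.sqrt_pos.mpr (div_pos hβ hN0)
  have hs2 : s ^ 2 = β / N := Real.sq_sqrt (le_of_lt (div_pos hβ hN0))
  have hπ : (0:ℝ) < 2 * Real.pi := by positivity
  have h2π : (0:ℝ) < Real.sqrt (2 * Real.pi) := Real.sqrt_pos.mpr hπ
  -- Step 1: termwise
  have hterm : ∀ σ : Fin N → Bool,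
      Real.exp (-β * cwH N σ)
        = Real.exp (-β/2) * Real.exp ((s * ∑ i, spin (σ i))^2 / 2) := by
    intro σ
    rw [← Real.exp_add]
    congr 1
    have hS : (∑ i, ∑ j ∈ Finset.Ioi i, spin (σ i) * spin (σ j))
        = ((∑ i, spin (σ i))^2 - N)/2 := by linarith [two_sum_Ioi N σ]
    rw [cwH, hS, mul_pow, hs2]
    field_simp
    ring
  -- Step 2: Gaussian representation of each term
  have hgauss : ∀ σ : Fin N → Bool,
      Real.exp ((s * ∑ i, spin (σ i))^2 / 2)
        = (Real.sqrt (2*Real.pi))⁻¹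
            * ∫ x : ℝ, Real.exp (-x^2/2 + (s * ∑ i, spin (σ i)) * x) := by
    intro σ
    rw [gauss_eval, ← mul_assoc, inv_mul_cancel₀ (ne_of_gt h2π), one_mul]
  -- Step 3: swap sum and integral
  have hswap : ∑ σ : Fin N → Bool, ∫ x : ℝ, Real.exp (-x^2/2 + (s * ∑ i, spin (σ i)) * x)
      = ∫ x : ℝ, ∑ σ : Fin N → Bool, Real.exp (-x^2/2 + (s * ∑ i, spin (σ i)) * x) :=
    (integral_finset_sum _ (fun σ _ => gauss_integrable _)).symm
  -- Step 4: pointwise evaluation of the sum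
  have hpt : ∀ x : ℝ, ∑ σ : Fin N → Bool, Real.exp (-x^2/2 + (s * ∑ i, spin (σ i)) * x)
      = 2^N * Real.exp (-x^2/2 + N * Real.log (Real.cosh (s*x))) := by
    intro x
    have h1 : ∀ σ : Fin N → Bool, Real.exp (-x^2/2 + (s * ∑ i, spin (σ i)) * x)
        = Real.exp (-x^2/2) * Real.exp ((s*x) * ∑ i, spin (σ i)) := by
      intro σ; rw [← Real.exp_add]; ring_nf
    simp_rw [h1, ← Finset.mul_sum, sum_exp_spin]
    rw [Real.exp_add, Real.exp_nat_mul, Real.exp_log (Real.cosh_pos _), mul_pow]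
    ring
  -- Step 5: substitution y = s x
  have hsub : ∫ x : ℝ, Real.exp (-x^2/2 + N * Real.log (Real.cosh (s*x)))
      = s⁻¹ * ∫ y : ℝ, Real.exp ((N : ℝ) * (-(y ^ 2) / (2 * β) + Real.log (Real.cosh y))) := by
    have hpoint : ∀ x : ℝ, Real.exp (-x^2/2 + N * Real.log (Real.cosh (s*x)))
        = Real.exp ((N : ℝ) * (-((s*x) ^ 2) / (2 * β) + Real.log (Real.cosh (s*x)))) := by
      intro x
      congr 1
      rw [mul_pow, hs2]
      field_simp
    simp_rw [hpoint]
    have := MeasureTheory.Measure.integral_comp_mul_left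
      (fun y : ℝ => Real.exp ((N : ℝ) * (-(y ^ 2) / (2 * β) + Real.log (Real.cosh y)))) s
    simp only [smul_eq_mul] at this
    rw [this, abs_of_pos (inv_pos.mpr hs0)]
  -- Step 6: constants
  have hconst : (Real.sqrt (2*Real.pi))⁻¹ * s⁻¹ = Real.sqrt ((N : ℝ) / (2 * Real.pi * β)) := by
    rw [hs, ← Real.sqrt_inv, ← Real.sqrt_inv, ← Real.sqrt_mul (by positivity)]
    congr 1
    field_simp
  -- assemble
  rw [cwZ]
  simp_rw [hterm, hgauss]
  rw [← Finset.mul_sum, ← Finset.mul_sum, hswap]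
  simp_rw [hpt]
  rw [MeasureTheory.integral_const_mul, hsub, ← hconst]
  ring
end

section
/- For the Curie-Weiss model with 0 ≤ β < 1, log Z_N(β) = N log 2 + G_N(β), where G_N(β) increases monotonically to Σ_{k≥2} β^k/(2k) = -β/2 - log√(1-β) as N → ∞. -/
open Finset Filter Topology

/-- `G_N(β) := log Z_N(β) - N log 2`. -/
noncomputable def cwG (N : ℕ) (β : ℝ) : ℝ := Real.log (cwZ N β) - N * Real.log 2

/-!
Since `-β H_N = β M² / (2N) - β / 2` for the magnetization `M = Σ σ_i`, the Gaussian
(Hubbard–Stratonovich) identity `exp (a² / 2) = (2π)^(-1/2) ∫ exp (a x - x² / 2) dx`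
linearizes the square, after which the sum over configurations factorizes:
`Z_N(β) = e^(-β/2) 2^N (2π)^(-1/2) ∫ e^(-x²/2) cosh (√β x / √N)^N dx`.
As `log cosh t / t²` decreases on `(0, ∞)`, the integrand increases with `N`. It converges to
`exp (-(1 - β) x² / 2)`, squeezed by `(1 + c² / (2N))^N ≤ cosh (c / √N)^N ≤ exp (c² / 2)`,
so for `β < 1` monotone convergence gives `∫ → √(2π / (1 - β))`.
-/

open Real MeasureTheory

theorem two_mul_sum_sum_Ioi_mul {α R : Type*} [LinearOrder α] [Fintype α]
    [LocallyFiniteOrderTop α] [LocallyFiniteOrderBot α] [CommRing R] (s : α → R) :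
    2 * ∑ i, ∑ j ∈ Ioi i, s i * s j = (∑ i, s i) ^ 2 - ∑ i, s i ^ 2 := by
  have off_diag := sum_sum_Ioi_add_eq_sum_sum_off_diag fun i j => s i * s j
  have row : ∀ i, ∑ j ∈ {i}ᶜ, s j * s i = (∑ j, s j) * s i - s i ^ 2 := fun i => by
    rw [sum_mul, ← sum_compl_add_sum {i}, sum_singleton]; ring
  calc 2 * ∑ i, ∑ j ∈ Ioi i, s i * s j = ∑ i, ∑ j ∈ Ioi i, (s j * s i + s i * s j) := by
        simp only [mul_sum, mul_comm (s _) (s _), ← two_mul]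
    _ = (∑ i, s i) ^ 2 - ∑ i, s i ^ 2 := by
        rw [off_diag]; simp only [row]; rw [sum_sub_distrib, ← mul_sum, sq]

theorem spin_sq (b : Bool) : spin b ^ 2 = 1 := by cases b <;> norm_num [spin]

noncomputable def magnetization {N : ℕ} (σ : Fin N → Bool) : ℝ := ∑ i, spin (σ i)

theorem cwH_eq (N : ℕ) (σ : Fin N → Bool) :
    cwH N σ = -(magnetization σ ^ 2 - N) / (2 * N) := by
  have h := two_mul_sum_sum_Ioi_mul fun i => spin (σ i)
  simp only [spin_sq, sum_const, card_univ, Fintype.card_fin, nsmul_eq_mul, mul_one] at h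
  rw [cwH, magnetization, ← h]
  ring

theorem sum_exp_mul_magnetization (N : ℕ) (t : ℝ) :
    ∑ σ : Fin N → Bool, exp (t * magnetization σ) = (2 * cosh t) ^ N := by
  simp only [magnetization, mul_sum, exp_sum]
  rw [← Fintype.prod_sum fun _ b => exp (t * spin b), prod_const, card_univ, Fintype.card_fin,
    Fintype.sum_bool, cosh_eq]
  norm_num [spin, ← sub_eq_add_neg]
  ring

namespace Real

theorem one_add_sq_div_two_le_cosh (x : ℝ) : 1 + x ^ 2 / 2 ≤ cosh x := by
  simpa [sum_range_succ] using
    sum_le_hasSum (range 2) (fun n _ => by rw [pow_mul]; positivity) (hasSum_cosh x)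

theorem div_sqrt_natCast_sq (c : ℝ) (N : ℕ) : (c / √N) ^ 2 = c ^ 2 / N := by
  rw [div_pow, sq_sqrt N.cast_nonneg]

theorem cosh_div_sqrt_pow_le (c : ℝ) (N : ℕ) : cosh (c / √N) ^ N ≤ exp (c ^ 2 / 2) := by
  calc cosh (c / √N) ^ N ≤ exp ((c / √N) ^ 2 / 2) ^ N := by
        gcongr; exact cosh_le_exp_half_sq _
    _ = exp (N * (c ^ 2 / N / 2)) := by rw [← exp_nat_mul, div_sqrt_natCast_sq]
    _ ≤ exp (c ^ 2 / 2) := by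
      rcases eq_or_ne N 0 with rfl | hN
      · simp; positivity
      · field_simp; rfl

theorem one_add_div_pow_le_cosh_div_sqrt_pow (c : ℝ) (N : ℕ) :
    (1 + c ^ 2 / 2 / N) ^ N ≤ cosh (c / √N) ^ N := by
  have h := one_add_sq_div_two_le_cosh (c / √N)
  rw [div_sqrt_natCast_sq, div_right_comm] at h
  gcongr

theorem tendsto_cosh_div_sqrt_pow (c : ℝ) :
    Tendsto (fun N : ℕ => cosh (c / √N) ^ N) atTop (𝓝 (exp (c ^ 2 / 2))) :=
  tendsto_of_tendsto_of_tendsto_of_le_of_le (tendsto_one_add_div_pow_exp _) tendsto_const_nhds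
    (one_add_div_pow_le_cosh_div_sqrt_pow c) (cosh_div_sqrt_pow_le c)

theorem hasDerivAt_log_cosh (x : ℝ) :
    HasDerivAt (fun t => log (cosh t)) (sinh x / cosh x) x := by
  simpa using (hasDerivAt_cosh x).log (cosh_pos x).ne'

theorem mul_sinh_div_cosh_le_two_mul_log_cosh {x : ℝ} (hx : 0 ≤ x) :
    x * sinh x / cosh x ≤ 2 * log (cosh x) := by
  let h : ℝ → ℝ := fun t => 2 * log (cosh t) - t * sinh t / cosh t
  have deriv_h : ∀ t, HasDerivAt h ((sinh t * cosh t - t) / cosh t ^ 2) t := fun t => by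
    refine (((hasDerivAt_log_cosh t).const_mul 2).sub
      (((hasDerivAt_id t).mul (hasDerivAt_sinh t)).div (hasDerivAt_cosh t)
        (cosh_pos t).ne')).congr_deriv ?_
    simp only [id, Pi.mul_apply]
    field_simp
    linear_combination (-t) * cosh_sq_sub_sinh_sq t
  have h_mono : MonotoneOn h (Set.Ici 0) := by
    refine monotoneOn_of_hasDerivWithinAt_nonneg (convex_Ici 0)
      (fun t _ => (deriv_h t).continuousAt.continuousWithinAt)
      (fun t _ => (deriv_h t).hasDerivWithinAt) fun t ht => ?_
    rw [interior_Ici, Set.mem_Ioi] at ht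
    have : t ≤ sinh t * cosh t :=
      (self_le_sinh_iff.2 ht.le).trans
        (le_mul_of_one_le_right (sinh_pos_iff.2 ht).le (one_le_cosh t))
    exact div_nonneg (by linarith) (by positivity)
  have := h_mono Set.self_mem_Ici hx hx
  simp only [h, cosh_zero, log_one, sinh_zero] at this
  linarith

theorem antitoneOn_log_cosh_div_sq :
    AntitoneOn (fun t => log (cosh t) / t ^ 2) (Set.Ioi 0) := by
  have deriv_eq : ∀ t ≠ 0, HasDerivAt (fun t => log (cosh t) / t ^ 2)
      (t * (t * sinh t / cosh t - 2 * log (cosh t)) / (t ^ 2) ^ 2) t := fun t ht => by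
    refine ((hasDerivAt_log_cosh t).div (hasDerivAt_pow 2 t)
      (pow_ne_zero 2 ht)).congr_deriv ?_
    field_simp
    ring
  refine antitoneOn_of_hasDerivWithinAt_nonpos (convex_Ioi 0)
    (fun t ht => (deriv_eq t (ne_of_gt ht)).continuousAt.continuousWithinAt)
    (fun t ht => (deriv_eq t ?_).hasDerivWithinAt) fun t ht => ?_
  · rw [interior_Ioi] at ht; exact ne_of_gt ht
  rw [interior_Ioi, Set.mem_Ioi] at ht
  have := mul_sinh_div_cosh_le_two_mul_log_cosh ht.le
  exact div_nonpos_of_nonpos_of_nonneg (mul_nonpos_of_nonneg_of_nonpos ht.le (by linarith))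
    (by positivity)

theorem cosh_div_sqrt_pow_eq {c : ℝ} (hc : c ≠ 0) {N : ℕ} (hN : N ≠ 0) :
    cosh (c / √N) ^ N = exp (c ^ 2 * (log (cosh (|c| / √N)) / (|c| / √N) ^ 2)) := by
  rw [div_sqrt_natCast_sq, sq_abs, ← cosh_abs, abs_div, abs_of_nonneg (sqrt_nonneg _),
    ← exp_log (pow_pos (cosh_pos _) N), log_pow]
  congr 1
  field_simp

theorem monotone_cosh_div_sqrt_pow (c : ℝ) : Monotone fun N : ℕ => cosh (c / √N) ^ N := by
  refine monotone_nat_of_le_succ fun N => ?_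
  rcases eq_or_ne c 0 with rfl | hc
  · simp
  rcases eq_or_ne N 0 with rfl | hN
  · simp [one_le_cosh]
  rw [cosh_div_sqrt_pow_eq hc hN, cosh_div_sqrt_pow_eq hc N.succ_ne_zero]
  gcongr exp (c ^ 2 * ?_)
  have hc' : 0 < |c| := abs_pos.2 hc
  refine antitoneOn_log_cosh_div_sq (Set.mem_Ioi.2 (by positivity))
    (Set.mem_Ioi.2 (by positivity)) ?_
  gcongr
  exact_mod_cast N.le_succ

end Real

theorem exp_mul_sub_sq_div_two (c x : ℝ) :
    exp (c * x - x ^ 2 / 2) = exp (c ^ 2 / 2) * exp (-(1 / 2) * (x - c) ^ 2) := by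
  rw [← exp_add]; ring_nf

theorem integrable_exp_mul_sub_sq_div_two (c : ℝ) :
    Integrable fun x => exp (c * x - x ^ 2 / 2) := by
  simp_rw [exp_mul_sub_sq_div_two c]
  exact ((integrable_exp_neg_mul_sq (by norm_num)).comp_sub_right c).const_mul _

theorem integral_exp_mul_sub_sq_div_two (c : ℝ) :
    ∫ x, exp (c * x - x ^ 2 / 2) = √(2 * π) * exp (c ^ 2 / 2) := by
  simp_rw [exp_mul_sub_sq_div_two c]
  rw [integral_const_mul, integral_sub_right_eq_self (fun x => exp (-(1 / 2) * x ^ 2)) c,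
    integral_gaussian, mul_comm]
  norm_num [div_div_eq_mul_div, mul_comm π]

noncomputable def cwIntegrand (β : ℝ) (N : ℕ) (x : ℝ) : ℝ :=
  exp (-x ^ 2 / 2) * cosh (√β * x / √N) ^ N

theorem cwZ_eq_integral {β : ℝ} (hβ : 0 ≤ β) {N : ℕ} (hN : N ≠ 0) :
    cwZ N β = exp (-β / 2) * 2 ^ N / √(2 * π) * ∫ x, cwIntegrand β N x := by
  have gauss_sum : ∀ x, ∑ σ : Fin N → Bool, exp (√β * magnetization σ / √N * x - x ^ 2 / 2)
      = 2 ^ N * cwIntegrand β N x := fun x => by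
    have split : ∀ σ : Fin N → Bool, exp (√β * magnetization σ / √N * x - x ^ 2 / 2)
        = exp (-x ^ 2 / 2) * exp (√β * x / √N * magnetization σ) := fun σ => by
      rw [← exp_add]; ring_nf
    rw [sum_congr rfl fun σ _ => split σ, ← mul_sum, sum_exp_mul_magnetization, cwIntegrand,
      mul_pow]
    ring
  have boltzmann : ∀ σ : Fin N → Bool, exp (-β * cwH N σ) = exp (-β / 2) / √(2 * π) *
      ∫ x, exp (√β * magnetization σ / √N * x - x ^ 2 / 2) := fun σ => by
    rw [integral_exp_mul_sub_sq_div_two, div_sqrt_natCast_sq, mul_pow, sq_sqrt hβ, cwH_eq,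
      ← mul_assoc, div_mul_cancel₀ _ (by positivity), ← exp_add]
    congr 1
    field_simp
    ring
  rw [cwZ, sum_congr rfl fun σ _ => boltzmann σ, ← mul_sum,
    ← integral_finsetSum _ fun σ _ => integrable_exp_mul_sub_sq_div_two _]
  simp_rw [gauss_sum, integral_const_mul]
  ring

section cwIntegrand

variable {β : ℝ}

theorem cwIntegrand_le (hβ : 0 ≤ β) (N : ℕ) (x : ℝ) :
    cwIntegrand β N x ≤ exp (-((1 - β) / 2) * x ^ 2) := by
  calc cwIntegrand β N x ≤ exp (-x ^ 2 / 2) * exp ((√β * x) ^ 2 / 2) := by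
        rw [cwIntegrand]; gcongr; exact cosh_div_sqrt_pow_le _ N
    _ = exp (-((1 - β) / 2) * x ^ 2) := by rw [← exp_add, mul_pow, sq_sqrt hβ]; ring_nf

theorem monotone_cwIntegrand (x : ℝ) : Monotone fun N => cwIntegrand β N x :=
  fun _ _ hMN => mul_le_mul_of_nonneg_left (monotone_cosh_div_sqrt_pow _ hMN) (exp_pos _).le

theorem tendsto_cwIntegrand (hβ : 0 ≤ β) (x : ℝ) :
    Tendsto (fun N => cwIntegrand β N x) atTop (𝓝 (exp (-((1 - β) / 2) * x ^ 2))) := by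
  have h := (tendsto_cosh_div_sqrt_pow (√β * x)).const_mul (exp (-x ^ 2 / 2))
  rwa [← exp_add, mul_pow, sq_sqrt hβ,
    show -x ^ 2 / 2 + β * x ^ 2 / 2 = -((1 - β) / 2) * x ^ 2 by ring] at h

theorem integrable_cwIntegrand (hβ : 0 ≤ β) (hβ1 : β < 1) (N : ℕ) :
    Integrable (cwIntegrand β N) := by
  refine (integrable_exp_neg_mul_sq (b := (1 - β) / 2) (by linarith)).mono'
    (by unfold cwIntegrand; fun_prop) ?_
  filter_upwards with x
  rw [norm_of_nonneg (by unfold cwIntegrand; positivity)]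
  exact cwIntegrand_le hβ N x

theorem monotone_integral_cwIntegrand (hβ : 0 ≤ β) (hβ1 : β < 1) :
    Monotone fun N => ∫ x, cwIntegrand β N x := fun _ _ hMN =>
  integral_mono (integrable_cwIntegrand hβ hβ1 _) (integrable_cwIntegrand hβ hβ1 _)
    fun x => monotone_cwIntegrand x hMN

theorem integral_cwIntegrand_pos (hβ : 0 ≤ β) (hβ1 : β < 1) (N : ℕ) :
    0 < ∫ x, cwIntegrand β N x := by
  have h0 : ∫ x, cwIntegrand β 0 x = √(2 * π) := by
    simpa [cwIntegrand, neg_div] using integral_exp_mul_sub_sq_div_two 0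
  exact (h0 ▸ sqrt_pos.2 (by positivity)).trans_le
    (monotone_integral_cwIntegrand hβ hβ1 N.zero_le)

theorem tendsto_integral_cwIntegrand (hβ : 0 ≤ β) (hβ1 : β < 1) :
    Tendsto (fun N => ∫ x, cwIntegrand β N x) atTop (𝓝 (√(2 * π) / √(1 - β))) := by
  have h := integral_tendsto_of_tendsto_of_monotone (integrable_cwIntegrand hβ hβ1)
    (integrable_exp_neg_mul_sq (by linarith)) (.of_forall monotone_cwIntegrand)
    (.of_forall (tendsto_cwIntegrand hβ))
  rwa [integral_gaussian, div_div_eq_mul_div, mul_comm π, sqrt_div' _ (by linarith)] at h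

theorem cwG_eq_log_integral (hβ : 0 ≤ β) (hβ1 : β < 1) {N : ℕ} (hN : N ≠ 0) :
    cwG N β = -β / 2 - log √(2 * π) + log (∫ x, cwIntegrand β N x) := by
  have h2π : 0 < √(2 * π) := sqrt_pos.2 (by positivity)
  rw [cwG, cwZ_eq_integral hβ hN,
    log_mul (by positivity) (integral_cwIntegrand_pos hβ hβ1 N).ne',
    log_div (by positivity) h2π.ne', log_mul (by positivity) (by positivity), log_exp, log_pow]
  ring

end cwIntegrand

/-- For `0 ≤ β < 1`, `log Z_N(β) = N log 2 + G_N(β)` where `G_N(β)` increases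
monotonically to `Σ_{k≥2} β^k/(2k) = -β/2 - log √(1-β)` as `N → ∞`. -/
theorem curie_weiss_high_temperature_free_energy
    (β : ℝ) (h0 : 0 ≤ β) (h1 : β < 1) :
    (∀ N, 1 ≤ N → cwG N β ≤ cwG (N + 1) β) ∧
    Tendsto (fun N => cwG N β) atTop
      (𝓝 (-β / 2 - Real.log (Real.sqrt (1 - β)))) := by
  have hG : ∀ N ≠ 0, cwG N β = -β / 2 - log √(2 * π) + log (∫ x, cwIntegrand β N x) :=
    fun N hN => cwG_eq_log_integral h0 h1 hN
  refine ⟨fun N hN => ?_, ?_⟩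
  · rw [hG N (by omega), hG (N + 1) N.succ_ne_zero]
    have := log_le_log (integral_cwIntegrand_pos h0 h1 N)
      (monotone_integral_cwIntegrand h0 h1 N.le_succ)
    linarith
  · have hlim :
        -β / 2 - log √(1 - β) = -β / 2 - log √(2 * π) + log (√(2 * π) / √(1 - β)) := by
      rw [log_div (sqrt_pos.2 (by positivity)).ne' (sqrt_pos.2 (by linarith)).ne']
      ring
    rw [hlim]
    refine (tendsto_const_nhds.add ((tendsto_integral_cwIntegrand h0 h1).log ?_)).congr' ?_
    · exact (div_pos (sqrt_pos.2 (by positivity)) (sqrt_pos.2 (by linarith))).ne'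
    · filter_upwards [eventually_ne_atTop 0] with N hN using (hG N hN).symm
end
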